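/- Let |A_0| = |A_1| = |B_0| = |B_1| = d. There exists a DISC superchannel Θ such that Θ[F_d] = R_d, i.e., the maximal replacement channel can be obtained from the quantum Fourier transform channel by a dephasing-covariant incoherent superchannel. -/

import Mathlib

open scoped ComplexOrder

noncomputable section

namespace DynCoh

/-- The space of linear maps from operators on `A` to operators on `B`
(candidate quantum channels). -/
abbrev QChanMap (A B : Type) [Fintype A] [Fintype B] : Type :=
  Matrix A A ℂ →ₗ[ℂ] Matrix B B ℂ

section Basic

variable {A0 A1 B0 B1 : Type} [Fintype A0] [Fintype A1] [Fintype B0] [Fintype B1]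

/-- `id_E ⊗ M` : the extension of a supermap `M` by the identity on a reference system `E`. -/
def extendL (E : Type) [Fintype E] (M : QChanMap A0 A1) :
    QChanMap (E × A0) (E × A1) where
  toFun X := Matrix.of fun p q => M (Matrix.of fun a a' => X (p.1, a) (q.1, a')) p.2 q.2
  map_add' X Y := by
    ext p q
    show M (Matrix.of fun a a' => (X + Y) (p.1, a) (q.1, a')) p.2 q.2 = _
    have h : (Matrix.of fun a a' => (X + Y) (p.1, a) (q.1, a'))
        = (Matrix.of fun a a' => X (p.1, a) (q.1, a'))
          + (Matrix.of fun a a' => Y (p.1, a) (q.1, a')) := rfl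
    rw [h, map_add]
    rfl
  map_smul' c X := by
    ext p q
    show M (Matrix.of fun a a' => (c • X) (p.1, a) (q.1, a')) p.2 q.2 = _
    have h : (Matrix.of fun a a' => (c • X) (p.1, a) (q.1, a'))
        = c • (Matrix.of fun a a' => X (p.1, a) (q.1, a')) := rfl
    rw [h, map_smul]
    rfl

/-- Complete positivity: `id_n ⊗ M` maps positive semidefinite matrices to
positive semidefinite matrices, for every finite reference dimension `n`. -/
def CompletelyPositive (M : QChanMap A0 A1) : Prop :=
  ∀ (n : ℕ) (X : Matrix (Fin n × A0) (Fin n × A0) ℂ),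
    X.PosSemidef → ((extendL (Fin n) M) X).PosSemidef

/-- Trace preservation. -/
def TracePreserving (M : QChanMap A0 A1) : Prop :=
  ∀ X : Matrix A0 A0 ℂ, (M X).trace = X.trace

/-- A quantum channel: a completely positive trace-preserving linear map. -/
def IsCPTP (M : QChanMap A0 A1) : Prop :=
  CompletelyPositive M ∧ TracePreserving M

end Basic

/-- The completely dephasing channel `D(ρ) = Σ_i |i⟩⟨i| ρ |i⟩⟨i|` (in the fixed
incoherent basis). -/
def dephasingMap (A : Type) [Fintype A] [DecidableEq A] : QChanMap A A where
  toFun X := Matrix.of fun i j => if i = j then X i j else 0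
  map_add' X Y := by
    ext i j
    by_cases h : i = j <;> simp [h, Matrix.add_apply]
  map_smul' c X := by
    ext i j
    by_cases h : i = j <;> simp [h, Matrix.smul_apply]

section Deph

variable {A0 A1 B0 B1 : Type} [Fintype A0] [Fintype A1] [Fintype B0] [Fintype B1]

/-- The dephasing superchannel `Δ[N] = D ∘ N ∘ D`. -/
def dephChan [DecidableEq A0] [DecidableEq A1] (N : QChanMap A0 A1) : QChanMap A0 A1 :=
  (dephasingMap A1) ∘ₗ N ∘ₗ (dephasingMap A0)

/-- A classical channel: a quantum channel satisfying `N = D ∘ N ∘ D`. -/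
def IsClassical [DecidableEq A0] [DecidableEq A1] (N : QChanMap A0 A1) : Prop :=
  IsCPTP N ∧ N = dephChan N

end Deph

/-- A superchannel from channels `A0 → A1` to channels `B0 → B1`, given by pre- and
post-processing quantum channels together with a reference (memory) system `Fin E`. -/
structure Superchannel (A0 A1 B0 B1 : Type)
    [Fintype A0] [Fintype A1] [Fintype B0] [Fintype B1] where
  E : ℕ
  pre : QChanMap B0 (Fin E × A0)
  post : QChanMap (Fin E × A1) B1
  pre_cptp : IsCPTP pre
  post_cptp : IsCPTP post

section Super

variable {A0 A1 B0 B1 : Type} [Fintype A0] [Fintype A1] [Fintype B0] [Fintype B1]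

/-- Action of a superchannel on a (candidate) channel: `Θ[N] = Q ∘ (id_E ⊗ N) ∘ P`. -/
def Superchannel.app (Θ : Superchannel A0 A1 B0 B1) (N : QChanMap A0 A1) :
    QChanMap B0 B1 :=
  Θ.post ∘ₗ (extendL (Fin Θ.E) N) ∘ₗ Θ.pre

/-- A maximally incoherent superchannel (MISC): maps every classical channel to a
classical channel. -/
def IsMISC [DecidableEq A0] [DecidableEq A1] [DecidableEq B0] [DecidableEq B1]
    (Θ : Superchannel A0 A1 B0 B1) : Prop :=
  ∀ N : QChanMap A0 A1, IsClassical N → IsClassical (Θ.app N)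

/-- A dephasing-covariant incoherent superchannel (DISC): `Δ ∘ Θ = Θ ∘ Δ`. -/
def IsDISC [DecidableEq A0] [DecidableEq A1] [DecidableEq B0] [DecidableEq B1]
    (Θ : Superchannel A0 A1 B0 B1) : Prop :=
  ∀ N : QChanMap A0 A1, dephChan (Θ.app N) = Θ.app (dephChan N)

end Super

/-- The trace norm `‖X‖₁ = Tr √(Xᴴ X)` of a matrix. -/
def traceNorm {A : Type} [Fintype A] [DecidableEq A] (X : Matrix A A ℂ) : ℝ :=
  (((Matrix.posSemidef_conjTranspose_mul_self X).1.eigenvectorUnitary.1 *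
      Matrix.diagonal (fun i => ((Real.sqrt
        ((Matrix.posSemidef_conjTranspose_mul_self X).1.eigenvalues i) : ℝ) : ℂ)) *
      (star (Matrix.posSemidef_conjTranspose_mul_self X).1.eigenvectorUnitary :
        Matrix A A ℂ)).trace).re

/-- A density matrix (state): positive semidefinite with unit trace. -/
def IsState {A : Type} [Fintype A] (ρ : Matrix A A ℂ) : Prop :=
  ρ.PosSemidef ∧ ρ.trace = 1

/-- A pure state: a rank-one projector, i.e. a state which is idempotent. -/
def IsPureState {A : Type} [Fintype A] (ρ : Matrix A A ℂ) : Prop :=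
  IsState ρ ∧ ρ * ρ = ρ

section Norms

variable {A0 A1 : Type} [Fintype A0] [Fintype A1] [DecidableEq A1]

/-- The diamond norm `‖X‖◇ = sup_ρ ‖(id_R ⊗ X)(ρ)‖₁`, the supremum running over all
finite reference systems `R` and all states `ρ` on `R ⊗ A0`. -/
def diamondNorm (X : QChanMap A0 A1) : ℝ :=
  ⨆ (n : ℕ), ⨆ ρ : {ρ : Matrix (Fin n × A0) (Fin n × A0) ℂ // IsState ρ},
    traceNorm ((extendL (Fin n) X) ρ.1)

end Norms

/-- Max-relative entropy of states: `D_max(ρ‖σ) = log₂ min{λ ≥ 0 : λσ - ρ ⪰ 0}`. -/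
def DmaxState {A : Type} [Fintype A] (ρ σ : Matrix A A ℂ) : ℝ :=
  Real.logb 2 (sInf {lam : ℝ | 0 ≤ lam ∧ ((lam : ℂ) • σ - ρ).PosSemidef})

section Entropies

variable {A0 A1 : Type} [Fintype A0] [Fintype A1]

/-- Max-relative entropy of channels:
`D̂_max(N‖M) = log₂ min{λ ≥ 0 : λM - N is completely positive}`. -/
def Dmax (N M : QChanMap A0 A1) : ℝ :=
  Real.logb 2 (sInf {lam : ℝ | 0 ≤ lam ∧ CompletelyPositive ((lam : ℂ) • M - N)})

variable [DecidableEq A0] [DecidableEq A1]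

/-- Log-robustness of coherence of a channel: `L̂R(N) = min_{M classical} D̂_max(N‖M)`. -/
def logRob (N : QChanMap A0 A1) : ℝ :=
  sInf {x : ℝ | ∃ M : QChanMap A0 A1, IsClassical M ∧ x = Dmax N M}

/-- Smoothed log-robustness of coherence:
`L̂R_ε(N) = min{L̂R(N') : N' a channel with ½‖N - N'‖◇ ≤ ε}`. -/
def logRobS (ε : ℝ) (N : QChanMap A0 A1) : ℝ :=
  sInf {x : ℝ | ∃ N' : QChanMap A0 A1,
    IsCPTP N' ∧ (1/2) * diamondNorm (N - N') ≤ ε ∧ x = logRob N'}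

/-- Dephasing log-robustness of coherence: `L̂R_Δ(N) = D̂_max(N‖Δ[N])`. -/
def logRobD (N : QChanMap A0 A1) : ℝ :=
  Dmax N (dephChan N)

/-- Smoothed dephasing log-robustness of coherence:
`L̂R_{ε,Δ}(N) = min{D̂_max(N'‖Δ[N']) : N' a channel with ½‖N - N'‖◇ ≤ ε}`. -/
def logRobDS (ε : ℝ) (N : QChanMap A0 A1) : ℝ :=
  sInf {x : ℝ | ∃ N' : QChanMap A0 A1,
    IsCPTP N' ∧ (1/2) * diamondNorm (N - N') ≤ ε ∧ x = logRobD N'}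

end Entropies

/-- The unitary conjugation channel `ρ ↦ U ρ Uᴴ`. -/
def conjChan {A : Type} [Fintype A] (U : Matrix A A ℂ) : QChanMap A A where
  toFun ρ := U * ρ * U.conjTranspose
  map_add' X Y := by simp [Matrix.mul_add, Matrix.add_mul]
  map_smul' c X := by simp [Matrix.mul_smul, Matrix.smul_mul]

/-- The quantum Fourier transform unitary
`F_d = (1/√d) Σ_{j,k} e^{2πijk/d} |j⟩⟨k|`. -/
def QFTmat (d : ℕ) : Matrix (Fin d) (Fin d) ℂ :=
  Matrix.of fun j k =>
    (((Real.sqrt d : ℝ) : ℂ))⁻¹ *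
      Complex.exp (2 * Real.pi * Complex.I * (j : ℕ) * (k : ℕ) / d)

/-- The quantum Fourier transform channel `F_d(ρ) = F_d ρ F_d†`. -/
def QFTChan (d : ℕ) : QChanMap (Fin d) (Fin d) :=
  conjChan (QFTmat d)

/-- The maximally coherent state `ψ_d⁺ = (1/d) Σ_{j,k} |j⟩⟨k|`. -/
def maxCohState (d : ℕ) : Matrix (Fin d) (Fin d) ℂ :=
  Matrix.of fun _ _ => (d : ℂ)⁻¹

/-- The maximal replacement channel `R_d(ρ) = Tr(ρ) ψ_d⁺`. -/
def replChan (d : ℕ) : QChanMap (Fin d) (Fin d) where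
  toFun ρ := ρ.trace • maxCohState d
  map_add' X Y := by simp [Matrix.trace_add, add_smul]
  map_smul' c X := by simp [Matrix.trace_smul, smul_smul]

/-- The normalized Choi matrix `J^N = (id ⊗ N)(φ⁺)`, with entries
`J^N_{(i,k),(j,l)} = (1/|A0|) N(|i⟩⟨j|)_{k,l}`. -/
def choi {A0 A1 : Type} [Fintype A0] [Fintype A1] [DecidableEq A0]
    (N : QChanMap A0 A1) : Matrix (A0 × A1) (A0 × A1) ℂ :=
  Matrix.of fun p q =>
    (Fintype.card A0 : ℂ)⁻¹ * N (Matrix.single p.1 q.1 1) p.2 q.2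

/-- Hypothesis-testing relative entropy of states:
`H_ε(ρ‖σ) = -log₂ min{Tr[Pσ] : 0 ≤ P ≤ I, Tr[Pρ] ≥ 1-ε}`. -/
def Hent (ε : ℝ) {A : Type} [Fintype A] [DecidableEq A] (ρ σ : Matrix A A ℂ) : ℝ :=
  - Real.logb 2 (sInf {x : ℝ | ∃ P : Matrix A A ℂ,
      P.PosSemidef ∧ ((1 : Matrix A A ℂ) - P).PosSemidef ∧
      1 - ε ≤ ((P * ρ).trace).re ∧ x = ((P * σ).trace).re})

section HypTest

variable {A0 A1 : Type} [Fintype A0] [Fintype A1] [DecidableEq A1]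

/-- The hypothesis-testing channel divergence
`Ĥ_ε(N‖M) = max_ψ H_ε((id⊗N)(ψ)‖(id⊗M)(ψ))`, the maximum running over all pure states
on a reference system tensored with the input. -/
def HentChan (ε : ℝ) (N M : QChanMap A0 A1) : ℝ :=
  ⨆ (n : ℕ), ⨆ ψ : {ρ : Matrix (Fin n × A0) (Fin n × A0) ℂ // IsPureState ρ},
    Hent ε ((extendL (Fin n) N) ψ.1) ((extendL (Fin n) M) ψ.1)

variable [DecidableEq A0]

/-- The hypothesis-testing relative entropy of coherence
`C_H^ε(N) = min_{M classical} Ĥ_ε(N‖M)`. -/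
def CH (ε : ℝ) (N : QChanMap A0 A1) : ℝ :=
  sInf {x : ℝ | ∃ M : QChanMap A0 A1, IsClassical M ∧ x = HentChan ε N M}

/-- The dephasing hypothesis-testing relative entropy of coherence
`C_{H,Δ}^ε(N) = Ĥ_ε(N‖Δ[N])`. -/
def CHD (ε : ℝ) (N : QChanMap A0 A1) : ℝ :=
  HentChan ε N (dephChan N)

end HypTest

section Rob

variable {A0 A1 B0 B1 : Type} [Fintype A0] [Fintype A1] [Fintype B0] [Fintype B1]
variable [DecidableEq A0] [DecidableEq A1] [DecidableEq B0] [DecidableEq B1]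

/-- Robustness of coherence of a channel:
`Ĉ_R(N) = min{s ≥ 0 : (N + sM)/(1+s) is classical for some channel M}`. -/
def robC (N : QChanMap A0 A1) : ℝ :=
  sInf {s : ℝ | 0 ≤ s ∧ ∃ M : QChanMap A0 A1, IsCPTP M ∧
    IsClassical ((((1 + s : ℝ) : ℂ))⁻¹ • (N + ((s : ℝ) : ℂ) • M))}

/-- A `δ`-MISC superchannel: `Ĉ_R(Θ[N]) ≤ δ` for every classical channel `N`. -/
def IsDeltaMISC (δ : ℝ) (Θ : Superchannel A0 A1 B0 B1) : Prop :=
  ∀ N : QChanMap A0 A1, IsClassical N → robC (Θ.app N) ≤ δ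

end Rob

section Tensor

variable {A0 A1 B0 B1 : Type} [Fintype A0] [Fintype A1] [Fintype B0] [Fintype B1]
variable [DecidableEq A0] [DecidableEq B0]

/-- The tensor product `N ⊗ M` of two (candidate) channels. -/
def tensorChan (N : QChanMap A0 A1) (M : QChanMap B0 B1) :
    QChanMap (A0 × B0) (A1 × B1) where
  toFun X := Matrix.of fun p q =>
    ∑ a : A0, ∑ a' : A0, ∑ b : B0, ∑ b' : B0,
      X (a, b) (a', b') *
        (N (Matrix.single a a' 1) p.1 q.1 *
          M (Matrix.single b b' 1) p.2 q.2)
  map_add' X Y := by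
    ext p q
    simp [Matrix.add_apply, add_mul, Finset.sum_add_distrib]
  map_smul' c X := by
    ext p q
    simp [Matrix.smul_apply, smul_eq_mul, mul_assoc, Finset.mul_sum]

/-- The `n`-fold tensor power `N^{⊗n}` of a (candidate) channel. -/
def powChan (n : ℕ) (N : QChanMap A0 A1) :
    QChanMap (Fin n → A0) (Fin n → A1) where
  toFun X := Matrix.of fun f g =>
    ∑ h : Fin n → A0, ∑ h' : Fin n → A0,
      X h h' * ∏ i : Fin n, N (Matrix.single (h i) (h' i) 1) (f i) (g i)
  map_add' X Y := by
    ext f g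
    simp [Matrix.add_apply, add_mul, Finset.sum_add_distrib]
  map_smul' c X := by
    ext f g
    simp [Matrix.smul_apply, smul_eq_mul, mul_assoc, Finset.mul_sum]

end Tensor

section Tasks

variable {B0 B1 : Type} [Fintype B0] [Fintype B1] [DecidableEq B0] [DecidableEq B1]

/-- One-shot dynamic coherence cost under MISC superchannels:
`c¹_{ε,MISC}(N) = min{log₂ d² : ½‖N - Θ[F_d]‖◇ ≤ ε for some MISC Θ}`. -/
def costMISC (ε : ℝ) (N : QChanMap B0 B1) : ℝ :=
  sInf {x : ℝ | ∃ d : ℕ, ∃ Θ : Superchannel (Fin d) (Fin d) B0 B1, IsMISC Θ ∧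
    (1/2) * diamondNorm (N - Θ.app (QFTChan d)) ≤ ε ∧ x = Real.logb 2 ((d : ℝ)^2)}

/-- One-shot dynamic coherence cost under DISC superchannels. -/
def costDISC (ε : ℝ) (N : QChanMap B0 B1) : ℝ :=
  sInf {x : ℝ | ∃ d : ℕ, ∃ Θ : Superchannel (Fin d) (Fin d) B0 B1, IsDISC Θ ∧
    (1/2) * diamondNorm (N - Θ.app (QFTChan d)) ≤ ε ∧ x = Real.logb 2 ((d : ℝ)^2)}

/-- One-shot dynamic coherence distillation under MISC superchannels:
`d¹_{ε,MISC}(N) = max{log₂ d² : ½‖Θ[N] - F_d‖◇ ≤ ε for some MISC Θ}`. -/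
def distillMISC (ε : ℝ) (N : QChanMap B0 B1) : ℝ :=
  sSup {x : ℝ | ∃ d : ℕ, ∃ Θ : Superchannel B0 B1 (Fin d) (Fin d), IsMISC Θ ∧
    (1/2) * diamondNorm (Θ.app N - QFTChan d) ≤ ε ∧ x = Real.logb 2 ((d : ℝ)^2)}

/-- One-shot dynamic coherence distillation under DISC superchannels. -/
def distillDISC (ε : ℝ) (N : QChanMap B0 B1) : ℝ :=
  sSup {x : ℝ | ∃ d : ℕ, ∃ Θ : Superchannel B0 B1 (Fin d) (Fin d), IsDISC Θ ∧
    (1/2) * diamondNorm (Θ.app N - QFTChan d) ≤ ε ∧ x = Real.logb 2 ((d : ℝ)^2)}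

/-- Regularized smoothed coherence cost under MISC:
`c^∞_{MISC}(N) = lim_{ε→0⁺} lim_{n→∞} (1/n) c¹_{ε,MISC}(N^{⊗n})`. -/
def costRegMISC (N : QChanMap B0 B1) : ℝ :=
  Filter.limUnder (nhdsWithin (0 : ℝ) (Set.Ioi 0)) fun ε : ℝ =>
    Filter.limUnder Filter.atTop fun n : ℕ => (n : ℝ)⁻¹ * costMISC ε (powChan n N)

/-- Regularized smoothed coherence cost under DISC. -/
def costRegDISC (N : QChanMap B0 B1) : ℝ :=
  Filter.limUnder (nhdsWithin (0 : ℝ) (Set.Ioi 0)) fun ε : ℝ =>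
    Filter.limUnder Filter.atTop fun n : ℕ => (n : ℝ)⁻¹ * costDISC ε (powChan n N)

/-- Asymptotic log-robustness:
`L̂R^∞(N) = lim_{ε→0⁺} liminf_{n→∞} (1/n) L̂R_ε(N^{⊗n})`. -/
def logRobReg (N : QChanMap B0 B1) : ℝ :=
  Filter.limUnder (nhdsWithin (0 : ℝ) (Set.Ioi 0)) fun ε : ℝ =>
    Filter.liminf (fun n : ℕ => (n : ℝ)⁻¹ * logRobS ε (powChan n N)) Filter.atTop

/-- Asymptotic dephasing log-robustness. -/
def logRobDReg (N : QChanMap B0 B1) : ℝ :=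
  Filter.limUnder (nhdsWithin (0 : ℝ) (Set.Ioi 0)) fun ε : ℝ =>
    Filter.liminf (fun n : ℕ => (n : ℝ)⁻¹ * logRobDS ε (powChan n N)) Filter.atTop

end Tasks

section Catalytic

variable {a0 a1 : ℕ}

/-- One-shot catalytic dynamic coherence cost under `δ`-MISC superchannels:
the least `log₂ d²` such that a `δ`-MISC superchannel converts `F_d ⊗ F_l`
(for some catalyst dimension `l`) exactly into `N' ⊗ F_l` with `½‖N' - N‖◇ ≤ ε`. -/
def catCost (ε δ : ℝ) (N : QChanMap (Fin a0) (Fin a1)) : ℝ :=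
  sInf {x : ℝ | ∃ d l : ℕ,
    ∃ Θ : Superchannel (Fin d × Fin l) (Fin d × Fin l) (Fin a0 × Fin l) (Fin a1 × Fin l),
    ∃ N' : QChanMap (Fin a0) (Fin a1), IsCPTP N' ∧
      IsDeltaMISC δ Θ ∧
      Θ.app (tensorChan (QFTChan d) (QFTChan l)) = tensorChan N' (QFTChan l) ∧
      (1/2) * diamondNorm (N' - N) ≤ ε ∧ x = Real.logb 2 ((d : ℝ)^2)}

end Catalytic

/-!
Discard the input, prepare the incoherent state `|0⟩⟨0|` and feed it to the channel, so that
`Θ[N] = Tr(·) • N(|0⟩⟨0|)`. As `|0⟩⟨0|` is diagonal and dephasing preserves the trace, `Θ`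
commutes with `Δ`; as `F_d |0⟩` is the uniform superposition, `Θ[F_d] = R_d`.
-/

section Replacement

open Matrix
open scoped Kronecker

variable {A B A0 A1 : Type} [Fintype A] [Fintype B] [Fintype A0] [Fintype A1]

def prepareChan (σ : Matrix A A ℂ) : QChanMap B A where
  toFun X := X.trace • σ
  map_add' X Y := by simp [trace_add, add_smul]
  map_smul' c X := by simp [trace_smul, smul_smul]

lemma prepareChan_apply (σ : Matrix A A ℂ) (X : Matrix B B ℂ) :
    prepareChan σ X = X.trace • σ := rfl

lemma extendL_prepareChan (n : ℕ) (σ : Matrix A A ℂ) (X : Matrix (Fin n × B) (Fin n × B) ℂ) :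
    extendL (Fin n) (prepareChan σ) X
      = (∑ b, X.submatrix (fun i => (i, b)) (fun i => (i, b))) ⊗ₖ σ := by
  ext p q
  simp [extendL, prepareChan_apply, trace, kroneckerMap_apply, Matrix.sum_apply]

lemma completelyPositive_prepareChan {σ : Matrix A A ℂ} (hσ : σ.PosSemidef) :
    CompletelyPositive (prepareChan σ : QChanMap B A) := by
  intro n X hX
  rw [extendL_prepareChan]
  exact (posSemidef_sum _ fun b _ => hX.submatrix _).kronecker hσ

lemma tracePreserving_prepareChan {σ : Matrix A A ℂ} (h : σ.trace = 1 ∨ IsEmpty B) :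
    TracePreserving (prepareChan σ : QChanMap B A) := by
  intro X
  rcases h with h | h
  · rw [prepareChan_apply, trace_smul, h, smul_eq_mul, mul_one]
  · simp [prepareChan_apply, trace, Finset.univ_eq_empty]

def stripUnitChan (A : Type) [Fintype A] : QChanMap (Fin 1 × A) A where
  toFun Y := Y.submatrix (fun a => (0, a)) (fun a => (0, a))
  map_add' _ _ := rfl
  map_smul' _ _ := rfl

lemma isCPTP_stripUnitChan : IsCPTP (stripUnitChan A) := by
  refine ⟨fun n X hX => hX.submatrix (fun r : Fin n × A => (r.1, ((0 : Fin 1), r.2))), ?_⟩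
  intro X
  show (X.submatrix _ _).trace = X.trace
  simp [trace, Fintype.sum_prod_type]

/-- The alternative `IsEmpty B` covers dimension `0`, where there is no state `σ` but every map
is trace preserving. -/
def Superchannel.replacing (σ : Matrix A0 A0 ℂ) (hσ : σ.PosSemidef)
    (htr : σ.trace = 1 ∨ IsEmpty B) : Superchannel A0 A1 B A1 where
  E := 1
  pre := prepareChan ((1 : Matrix (Fin 1) (Fin 1) ℂ) ⊗ₖ σ)
  post := stripUnitChan A1
  pre_cptp := ⟨completelyPositive_prepareChan (PosSemidef.one.kronecker hσ),
    tracePreserving_prepareChan (by simpa [trace_kronecker] using htr)⟩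
  post_cptp := isCPTP_stripUnitChan

lemma Superchannel.replacing_app (σ : Matrix A0 A0 ℂ) (hσ : σ.PosSemidef)
    (htr : σ.trace = 1 ∨ IsEmpty B) (N : QChanMap A0 A1) :
    (Superchannel.replacing σ hσ htr).app N = prepareChan (N σ) := by
  ext X i j
  have hin : (Matrix.of fun a a' => (prepareChan ((1 : Matrix (Fin 1) (Fin 1) ℂ) ⊗ₖ σ) X)
      ((0 : Fin 1), a) ((0 : Fin 1), a')) = X.trace • σ := by
    ext a a'
    simp [prepareChan_apply, kroneckerMap_apply]
  show N (Matrix.of fun a a' => (prepareChan ((1 : Matrix (Fin 1) (Fin 1) ℂ) ⊗ₖ σ) X)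
      ((0 : Fin 1), a) ((0 : Fin 1), a')) i j = _
  rw [hin, map_smul]
  rfl

lemma trace_dephasingMap [DecidableEq B] (X : Matrix B B ℂ) :
    (dephasingMap B X).trace = X.trace := by
  simp [dephasingMap, trace]

lemma dephChan_prepareChan [DecidableEq A] [DecidableEq B] (σ : Matrix A A ℂ) :
    dephChan (prepareChan σ : QChanMap B A) = prepareChan (dephasingMap A σ) := by
  ext X : 1
  simp [dephChan, prepareChan_apply, trace_dephasingMap]

lemma Superchannel.isDISC_replacing [DecidableEq A0] [DecidableEq A1] [DecidableEq B]
    {σ : Matrix A0 A0 ℂ} (hσ : σ.PosSemidef) (htr : σ.trace = 1 ∨ IsEmpty B)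
    (hD : dephasingMap A0 σ = σ) :
    IsDISC (Superchannel.replacing σ hσ htr : Superchannel A0 A1 B A1) := by
  intro N
  rw [Superchannel.replacing_app, Superchannel.replacing_app, dephChan_prepareChan]
  simp [dephChan, hD]

end Replacement

section Fourier

open Matrix

lemma posSemidef_single_self {A : Type} [DecidableEq A] (a : A) :
    (single a a (1 : ℂ)).PosSemidef := by
  rw [← diagonal_single]
  exact PosSemidef.diagonal fun b => by by_cases h : b = a <;> simp [h]

variable {A : Type} [Fintype A] [DecidableEq A]

lemma dephasingMap_single (a : A) (c : ℂ) :
    dephasingMap A (single a a c) = single a a c := by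
  rw [← diagonal_single]
  ext i j
  by_cases h : i = j <;> simp [dephasingMap, h]

lemma conjChan_single (U : Matrix A A ℂ) (a : A) :
    conjChan U (single a a 1) = of fun i j => U i a * star (U j a) := by
  ext i j
  simp [conjChan, mul_apply, single, ite_and]

lemma QFTmat_apply_zero (d : ℕ) [NeZero d] (j : Fin d) :
    QFTmat d j 0 = ((Real.sqrt d : ℝ) : ℂ)⁻¹ := by
  simp [QFTmat]

lemma QFTChan_single_zero (d : ℕ) [NeZero d] : QFTChan d (single 0 0 1) = maxCohState d := by
  ext i j
  rw [QFTChan, conjChan_single, of_apply, QFTmat_apply_zero, QFTmat_apply_zero, maxCohState,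
    of_apply, ← Complex.ofReal_inv, Complex.star_def, Complex.conj_ofReal, ← Complex.ofReal_mul,
    ← mul_inv, Real.mul_self_sqrt (Nat.cast_nonneg d), Complex.ofReal_inv, Complex.ofReal_natCast]

lemma replChan_eq_prepareChan (d : ℕ) : replChan d = prepareChan (maxCohState d) := rfl

end Fourier

/-- There exists a DISC superchannel `Θ` such that `Θ[F_d] = R_d`:
the maximal replacement channel can be obtained from the QFT channel by a
dephasing-covariant incoherent superchannel. -/
theorem stmt18 (d : ℕ) :
    ∃ Θ : Superchannel (Fin d) (Fin d) (Fin d) (Fin d),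
      IsDISC Θ ∧ Θ.app (QFTChan d) = replChan d := by
  obtain _ | m := d
  · exact ⟨.replacing 0 .zero (.inr inferInstance), Superchannel.isDISC_replacing _ _ (map_zero _),
      Subsingleton.elim _ _⟩
  · refine ⟨.replacing (Matrix.single 0 0 1) (posSemidef_single_self 0)
      (.inl (Matrix.trace_single_eq_same _ _)), Superchannel.isDISC_replacing _ _
      (dephasingMap_single _ _), ?_⟩
    rw [Superchannel.replacing_app, QFTChan_single_zero, replChan_eq_prepareChan]

end DynCoh
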